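/- Let α, β, γ, σ be integers with β ≥ γ > σ ≥ 0, α + σ ≥ 2γ, α + β + σ > 3, and γ = β, and let G be the group presented by ⟨a,b | a^(2^α) = b^(2^β) = [a,b,a] = [a,b,b] = e, a^(2^(α+σ-γ)) = [a,b]^(2^σ)⟩ (general type). Then G is capable if and only if α = β + 1 and σ = β - 1. -/

import Mathlib

/-- The paper's commutator convention: `[x,y] = x⁻¹y⁻¹xy`. -/
def pcomm {G : Type*} [Group G] (x y : G) : G := x⁻¹ * y⁻¹ * x * y

/-- A group is capable if it is isomorphic to `K/Z(K)` for some group `K`. -/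
def IsCapable (G : Type*) [Group G] : Prop :=
  ∃ (K : Type) (_ : Group K), Nonempty ((K ⧸ Subgroup.center K) ≃* G)

/-- Relators of the type (ii) (general type) presentation
`⟨a,b | a^(2^α) = b^(2^β) = [a,b,a] = [a,b,b] = e, a^(2^(α+σ-γ)) = [a,b]^(2^σ)⟩`. -/
def relsII (α β γ σ : ℕ) : Set (FreeGroup (Fin 2)) :=
  let a : FreeGroup (Fin 2) := FreeGroup.of 0
  let b : FreeGroup (Fin 2) := FreeGroup.of 1
  {a ^ 2 ^ α, b ^ 2 ^ β, pcomm (pcomm a b) a, pcomm (pcomm a b) b,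
    a ^ 2 ^ (α + σ - γ) * (pcomm a b ^ 2 ^ σ)⁻¹}


/-!
Suppose `G = K ⧸ Z(K)` (here `γ = β`) and lift `a, b` to `x, y ∈ K`; put `z = [x, y]`. The
relators of `G` become central elements of `K`: `[z, x]`, `[z, y]`, `y ^ 2 ^ β` and
`x ^ 2 ^ e * z ^ (-2 ^ σ)` with `e = α + σ - β`. Collecting `[x ^ 2 ^ e, y]` and `[x, y ^ 2 ^ β]`
with the Hall formulas shows that `[z, y] ^ 2 ^ σ` is killed both by `2 ^ β` and, as soon as
`α ≥ β + 2`, by an odd number, so it is trivial; then `z ^ 2 ^ β = 1` and `x ^ 2 ^ (α - 1)`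
commutes with `x` and `y`. Hence it is central and `a ^ 2 ^ (α - 1) = 1` in `G`, whereas a quotient
of the integral Heisenberg group shows that `a` has order `2 ^ α`.

The constraints leave `α = β + 1`, `σ = β - 1`. Then `K` is a finite quotient of the lattice of the
4-dimensional filiform nilpotent group; the map `G → K ⧸ Z(K)` defined on generators has the left
inverse induced by `X ^ i * Y ^ j * Z ^ k * W ^ n ↦ a ^ i * b ^ j * [a, b] ^ k`, and is onto.
-/

section Commutator

variable {G H : Type*} [Group G] [Group H]

theorem map_pcomm (f : G →* H) (x y : G) : f (pcomm x y) = pcomm (f x) (f y) := by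
  simp [pcomm]

theorem pcomm_inv (x y : G) : (pcomm x y)⁻¹ = pcomm y x := by
  simp only [pcomm]; group

theorem pcomm_eq_one_iff_commute {x y : G} : pcomm x y = 1 ↔ Commute x y := by
  rw [pcomm, mul_assoc, ← mul_inv_rev, inv_mul_eq_one, eq_comm]
  rfl

theorem mul_eq_mul_pcomm (x y : G) : x * y = y * x * pcomm x y := by
  simp only [pcomm]; group

theorem pcomm_eq_of_mul_eq {x y d : G} (h : x * y = y * x * d) : pcomm x y = d := by
  rw [pcomm, mul_assoc, mul_assoc, h]; group

theorem inv_mul_mul_eq_mul_pcomm (x y : G) : y⁻¹ * x * y = x * pcomm x y := by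
  simp only [pcomm]; group

theorem pcomm_mul_left (u v w : G) : pcomm (u * v) w = v⁻¹ * pcomm u w * v * pcomm v w := by
  simp only [pcomm]; group

theorem pcomm_mul_left_of_mem_center {w : G} (hw : w ∈ Subgroup.center G) (u v : G) :
    pcomm (w * u) v = pcomm u v := by
  rw [pcomm_mul_left, pcomm_eq_one_iff_commute.2 (Subgroup.mem_center_iff.1 hw v).symm]
  group

theorem pcomm_eq_pcomm_of_mul_inv_mem_center {u v : G} (h : u * v⁻¹ ∈ Subgroup.center G)
    (g : G) : pcomm u g = pcomm v g := by
  simpa using pcomm_mul_left_of_mem_center h v g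

theorem pcomm_zpow_left {x y : G} (h : Commute (pcomm x y) x) (n : ℤ) :
    pcomm (x ^ n) y = pcomm x y ^ n := by
  have hconj : y⁻¹ * x ^ n * y = (y⁻¹ * x * y) ^ n := by
    simpa using (conj_zpow (a := y⁻¹) (b := x) (i := n)).symm
  calc pcomm (x ^ n) y = (x ^ n)⁻¹ * (y⁻¹ * x ^ n * y) := by simp only [pcomm]; group
    _ = pcomm x y ^ n := by rw [hconj, inv_mul_mul_eq_mul_pcomm, h.symm.mul_zpow]; group

theorem pcomm_zpow_right {x y : G} (h : Commute (pcomm x y) y) (n : ℤ) :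
    pcomm x (y ^ n) = pcomm x y ^ n := by
  rw [← pcomm_inv, pcomm_zpow_left (by rw [← pcomm_inv]; exact h.inv_left), ← pcomm_inv,
    inv_zpow, inv_inv]

theorem pcomm_pow_left {x y : G} (h : Commute (pcomm x y) x) (n : ℕ) :
    pcomm (x ^ n) y = pcomm x y ^ n := by
  exact_mod_cast pcomm_zpow_left h n

theorem pcomm_pow_right {x y : G} (h : Commute (pcomm x y) y) (n : ℕ) :
    pcomm x (y ^ n) = pcomm x y ^ n := by
  exact_mod_cast pcomm_zpow_right h n

theorem zpow_mul_zpow_comm_of_commute_pcomm {x y : G} (hx : Commute (pcomm x y) x)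
    (hy : Commute (pcomm x y) y) (i j : ℤ) :
    y ^ j * x ^ i = x ^ i * y ^ j * pcomm x y ^ (-(i * j)) := by
  rw [mul_eq_mul_pcomm (y ^ j), ← pcomm_inv, pcomm_zpow_right, pcomm_zpow_left hx, ← zpow_mul,
    zpow_neg]
  rw [pcomm_zpow_left hx]
  exact hy.zpow_left i

theorem pcomm_pow_left_eq_of_mem_center {x y : G} (h : pcomm (pcomm x y) x ∈ Subgroup.center G)
    (n : ℕ) : pcomm (x ^ n) y = pcomm x y ^ n * pcomm (pcomm x y) x ^ n.choose 2 := by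
  set z := pcomm x y
  set w := pcomm z x
  have hw (g : G) : Commute w g := (Subgroup.mem_center_iff.1 h g).symm
  induction n with
  | zero => simp [pcomm]
  | succ n ih =>
    have hzw : x⁻¹ * z * x = z * w := inv_mul_mul_eq_mul_pcomm z x
    have hwx : x⁻¹ * w * x = w := by
      rw [inv_mul_mul_eq_mul_pcomm, pcomm_eq_one_iff_commute.2 (hw x), mul_one]
    have hconj : x⁻¹ * (z ^ n * w ^ n.choose 2) * x = z ^ n * (w ^ n * w ^ n.choose 2) := by
      have := map_mul (MulAut.conj x⁻¹) (z ^ n) (w ^ n.choose 2)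
      simp only [MulAut.conj_apply, inv_inv, map_pow] at this
      rw [this, hzw, hwx, (hw z).symm.mul_pow, mul_assoc]
    rw [pow_succ, pcomm_mul_left, ih, hconj, Nat.choose_succ_succ', Nat.choose_one_right,
      pow_add, pow_succ, mul_assoc, ((hw z).pow_left _).mul_left ((hw z).pow_left _) |>.eq]
    group

theorem pcomm_pow_right_eq_of_mem_center {x y : G} (h : pcomm (pcomm x y) y ∈ Subgroup.center G)
    (n : ℕ) : pcomm x (y ^ n) = pcomm x y ^ n * pcomm (pcomm x y) y ^ n.choose 2 := by
  have hw (g : G) : Commute (pcomm (pcomm x y) y) g := (Subgroup.mem_center_iff.1 h g).symm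
  have hyx : pcomm (pcomm y x) y = (pcomm (pcomm x y) y)⁻¹ := by
    rw [← pcomm_inv x y, ← zpow_neg_one, pcomm_zpow_left (hw _), zpow_neg_one]
  rw [← pcomm_inv, pcomm_pow_left_eq_of_mem_center (by rw [hyx]; exact inv_mem h), hyx,
    ← pcomm_inv x y, mul_inv_rev, inv_pow, inv_inv, inv_pow, inv_inv]
  exact ((hw _).pow_left _).eq

end Commutator

theorem Nat.choose_two_two_pow {e : ℕ} (he : e ≠ 0) :
    (2 ^ e).choose 2 = 2 ^ (e - 1) * (2 ^ e - 1) := by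
  obtain ⟨d, rfl⟩ := Nat.exists_eq_succ_of_ne_zero he
  rw [Nat.choose_two_right, pow_succ, Nat.succ_sub_one, mul_comm _ 2, Nat.mul_assoc,
    Nat.mul_div_cancel_left _ two_pos]

theorem pow_choose_two_two_pow_eq_one {M : Type*} [Monoid M] {g : M} {s k : ℕ}
    (hg : g ^ 2 ^ s = 1) (hsk : s < k) : g ^ (2 ^ k).choose 2 = 1 := by
  rw [Nat.choose_two_two_pow (by omega), ← Nat.pow_sub_mul_pow 2 (show s ≤ k - 1 by omega),
    mul_comm (2 ^ _), mul_assoc, pow_mul, hg, one_pow]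

theorem eq_one_of_pow_two_pow_eq_one_of_odd {M : Type*} [Monoid M] {g : M} {n q : ℕ}
    (hn : g ^ 2 ^ n = 1) (hq : g ^ q = 1) (hodd : Odd q) : g = 1 := by
  have hcop : Nat.gcd (2 ^ n) q = 1 := (Nat.coprime_two_left.2 hodd).pow_left n
  simpa [hcop] using pow_gcd_eq_one.2 ⟨hn, hq⟩

theorem zpow_eq_of_forall_add_one {G : Type*} [Group G] {g : G} {f : ℤ → G} (h0 : f 0 = 1)
    (hf : ∀ m, f (m + 1) = f m * g) (m : ℤ) : g ^ m = f m := by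
  induction m using Int.induction_on with
  | zero => rw [zpow_zero, h0]
  | succ m ih => rw [zpow_add_one, ih, hf]
  | pred m ih => rw [zpow_sub_one, ih, mul_inv_eq_iff_eq_mul, ← hf, sub_add_cancel]

theorem Subgroup.mem_center_iff_mem_centralizer {G : Type*} [Group G] {s : Set G}
    (hs : Subgroup.closure s = ⊤) {g : G} :
    g ∈ Subgroup.center G ↔ g ∈ Subgroup.centralizer s := by
  rw [← Subgroup.centralizer_univ, ← Subgroup.coe_top, ← hs, Subgroup.centralizer_closure]

theorem QuotientGroup.commute_mk_iff {G : Type*} [Group G] {N : Subgroup G} [N.Normal]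
    {g h : G} : Commute (g : G ⧸ N) h ↔ pcomm g h ∈ N := by
  rw [← pcomm_eq_one_iff_commute, ← QuotientGroup.mk'_apply, ← QuotientGroup.mk'_apply,
    ← map_pcomm, QuotientGroup.mk'_apply, QuotientGroup.eq_one_iff]

theorem mem_center_of_commute_of_ker_le_center {K G : Type*} [Group K] [Group G] (ψ : K →* G)
    (hker : ψ.ker ≤ Subgroup.center K) {S : Set K} (hS : Subgroup.closure (ψ '' S) = ⊤) {u : K}
    (hu : ∀ s ∈ S, Commute u s) : u ∈ Subgroup.center K := by
  have hle : Subgroup.closure S ⊔ ψ.ker ≤ Subgroup.centralizer {u} := by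
    refine sup_le ((Subgroup.closure_le _).2 fun s hs => ?_) fun k hk => ?_
    · exact Subgroup.mem_centralizer_singleton_iff.2 (hu s hs).symm
    · exact Subgroup.mem_centralizer_singleton_iff.2 (Subgroup.mem_center_iff.1 (hker hk) u).symm
  rw [← Subgroup.comap_map_eq, MonoidHom.map_closure, hS, Subgroup.comap_top, top_le_iff] at hle
  exact Subgroup.mem_center_iff.2 fun g =>
    Subgroup.mem_centralizer_singleton_iff.1 (hle ▸ Subgroup.mem_top g)

theorem IsCapable.exists_monoidHom {G : Type*} [Group G] (h : IsCapable G) :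
    ∃ (K : Type) (_ : Group K) (ψ : K →* G),
      Function.Surjective ψ ∧ ψ.ker = Subgroup.center K := by
  obtain ⟨K, _, ⟨φ⟩⟩ := h
  refine ⟨K, inferInstance, (φ : K ⧸ Subgroup.center K →* G).comp (QuotientGroup.mk' _),
    φ.surjective.comp (QuotientGroup.mk'_surjective _), ?_⟩
  rw [MonoidHom.ker_mulEquiv_comp, QuotientGroup.ker_mk']

section RelsII

variable {α β γ σ : ℕ}

theorem relsII.lift_eq_one {H : Type*} [Group H] {a b : H} (ha : a ^ 2 ^ α = 1)
    (hb : b ^ 2 ^ β = 1) (hca : Commute (pcomm a b) a) (hcb : Commute (pcomm a b) b)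
    (hab : a ^ 2 ^ (α + σ - γ) = pcomm a b ^ 2 ^ σ) :
    ∀ r ∈ relsII α β γ σ, FreeGroup.lift ![a, b] r = 1 := by
  rintro r (rfl | rfl | rfl | rfl | rfl) <;>
    simp [map_pcomm, pcomm_eq_one_iff_commute, ha, hb, hca, hcb, hab]

theorem relsII.lift_of_eq_one {r : FreeGroup (Fin 2)} (hr : r ∈ relsII α β γ σ) :
    FreeGroup.lift (PresentedGroup.of (rels := relsII α β γ σ)) r = 1 := by
  rw [show FreeGroup.lift PresentedGroup.of = PresentedGroup.mk (relsII α β γ σ) from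
    FreeGroup.ext_hom _ _ fun _ => by simp; rfl]
  exact PresentedGroup.one_of_mem hr

theorem relsII.of_one_pow :
    (PresentedGroup.of 1 : PresentedGroup (relsII α β γ σ)) ^ 2 ^ β = 1 := by
  have := relsII.lift_of_eq_one (α := α) (β := β) (γ := γ) (σ := σ) (r := .of 1 ^ 2 ^ β)
    (by simp [relsII])
  simpa only [map_pow, FreeGroup.lift_apply_of] using this

theorem relsII.commute_pcomm_of_zero : Commute
    (pcomm (PresentedGroup.of 0) (PresentedGroup.of 1) : PresentedGroup (relsII α β γ σ))
    (PresentedGroup.of 0) := by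
  have := relsII.lift_of_eq_one (α := α) (β := β) (γ := γ) (σ := σ)
    (r := pcomm (pcomm (.of 0) (.of 1)) (.of 0)) (by simp [relsII])
  simpa only [map_pcomm, FreeGroup.lift_apply_of, pcomm_eq_one_iff_commute] using this

theorem relsII.commute_pcomm_of_one : Commute
    (pcomm (PresentedGroup.of 0) (PresentedGroup.of 1) : PresentedGroup (relsII α β γ σ))
    (PresentedGroup.of 1) := by
  have := relsII.lift_of_eq_one (α := α) (β := β) (γ := γ) (σ := σ)
    (r := pcomm (pcomm (.of 0) (.of 1)) (.of 1)) (by simp [relsII])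
  simpa only [map_pcomm, FreeGroup.lift_apply_of, pcomm_eq_one_iff_commute] using this

theorem relsII.of_zero_pow_eq :
    (PresentedGroup.of 0 : PresentedGroup (relsII α β γ σ)) ^ 2 ^ (α + σ - γ) =
      pcomm (PresentedGroup.of 0) (PresentedGroup.of 1) ^ 2 ^ σ := by
  have := relsII.lift_of_eq_one (α := α) (β := β) (γ := γ) (σ := σ)
    (r := .of 0 ^ 2 ^ (α + σ - γ) * (pcomm (.of 0) (.of 1) ^ 2 ^ σ)⁻¹) (by simp [relsII])
  simpa only [map_mul, map_inv, map_pow, map_pcomm, FreeGroup.lift_apply_of, mul_inv_eq_one]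
    using this

end RelsII

section CentralRelators

variable {K : Type*} [Group K] {x y : K}

theorem pow_pcomm_pcomm_left_eq_one {m s : ℕ} (hzx : pcomm (pcomm x y) x ∈ Subgroup.center K)
    (hw : x ^ m * (pcomm x y ^ s)⁻¹ ∈ Subgroup.center K) : pcomm (pcomm x y) x ^ s = 1 := by
  rw [← pcomm_pow_left (Subgroup.mem_center_iff.1 hzx _).symm,
    ← pcomm_eq_pcomm_of_mul_inv_mem_center hw, pcomm_eq_one_iff_commute]
  exact Commute.pow_left (Commute.refl x) m

theorem pcomm_pow_eq_pcomm_pcomm_pow {σ e : ℕ} (hσe : σ < e)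
    (hzx : pcomm (pcomm x y) x ∈ Subgroup.center K)
    (hzy : pcomm (pcomm x y) y ∈ Subgroup.center K)
    (hw : x ^ 2 ^ e * (pcomm x y ^ 2 ^ σ)⁻¹ ∈ Subgroup.center K) :
    pcomm x y ^ 2 ^ e = pcomm (pcomm x y) y ^ 2 ^ σ := by
  rw [← pcomm_pow_left (Subgroup.mem_center_iff.1 hzy _).symm,
    ← pcomm_eq_pcomm_of_mul_inv_mem_center hw, pcomm_pow_left_eq_of_mem_center hzx,
    pow_choose_two_two_pow_eq_one (pow_pcomm_pcomm_left_eq_one hzx hw) hσe, mul_one]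

/-- Comparing `z ^ 2 ^ e = [z, y] ^ 2 ^ σ` with the Hall formula for `[x, y ^ 2 ^ β] = 1`, where
`z = [x, y]`, shows that `[z, y] ^ 2 ^ σ` has odd order once `σ + 2 ≤ e`. -/
theorem pow_pcomm_pcomm_right_eq_one {β σ e : ℕ} (hσβ : σ < β) (hβe : β ≤ e)
    (hσe : σ + 2 ≤ e) (hzx : pcomm (pcomm x y) x ∈ Subgroup.center K)
    (hzy : pcomm (pcomm x y) y ∈ Subgroup.center K) (hy : y ^ 2 ^ β ∈ Subgroup.center K)
    (hw : x ^ 2 ^ e * (pcomm x y ^ 2 ^ σ)⁻¹ ∈ Subgroup.center K) :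
    pcomm (pcomm x y) y ^ 2 ^ σ = 1 := by
  set z := pcomm x y
  set z₂ := pcomm z y
  have hyc (g : K) : Commute g (y ^ 2 ^ β) := Subgroup.mem_center_iff.1 hy g
  have hz₂ : z₂ ^ 2 ^ β = 1 := by
    rw [← pcomm_pow_right (Subgroup.mem_center_iff.1 hzy _).symm, pcomm_eq_one_iff_commute]
    exact hyc z
  have hz₂C : z₂ ^ (2 ^ β).choose 2 = (z ^ 2 ^ β)⁻¹ := by
    refine eq_inv_of_mul_eq_one_right ?_
    rw [← pcomm_pow_right_eq_of_mem_center hzy, pcomm_eq_one_iff_commute]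
    exact hyc x
  have hexp : 2 ^ σ * (2 ^ (e - σ - 1) * (2 ^ β - 1)) = (2 ^ β).choose 2 * 2 ^ (e - β) := by
    rw [Nat.choose_two_two_pow (by omega), ← mul_assoc, ← pow_add, mul_right_comm, ← pow_add]
    congr 2
    omega
  have hodd : Odd (1 + 2 ^ (e - σ - 1) * (2 ^ β - 1)) :=
    Even.one_add (Even.mul_right ((Nat.even_pow' (by omega)).2 even_two) _)
  refine eq_one_of_pow_two_pow_eq_one_of_odd (n := β) ?_ ?_ hodd
  · rw [← pow_mul, mul_comm, pow_mul, hz₂, one_pow]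
  · rw [← pow_mul, mul_add, mul_one, pow_add, hexp, pow_mul, hz₂C, inv_pow, ← pow_mul, ← pow_add,
      Nat.add_sub_cancel' hβe, pcomm_pow_eq_pcomm_pcomm_pow (by omega) hzx hzy hw, mul_inv_cancel]

theorem commute_pow_two_pow_of_mem_center {β σ e n : ℕ} (hσβ : σ < β) (hβe : β ≤ e)
    (hσe : σ + 2 ≤ e) (hβn : β ≤ n) (hzx : pcomm (pcomm x y) x ∈ Subgroup.center K)
    (hzy : pcomm (pcomm x y) y ∈ Subgroup.center K) (hy : y ^ 2 ^ β ∈ Subgroup.center K)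
    (hw : x ^ 2 ^ e * (pcomm x y ^ 2 ^ σ)⁻¹ ∈ Subgroup.center K) :
    Commute (x ^ 2 ^ n) y := by
  have hz : pcomm x y ^ 2 ^ β = 1 := by
    have := pcomm_pow_right_eq_of_mem_center hzy (2 ^ β)
    rwa [pcomm_eq_one_iff_commute.2 (Subgroup.mem_center_iff.1 hy x),
      pow_choose_two_two_pow_eq_one (pow_pcomm_pcomm_right_eq_one hσβ hβe hσe hzx hzy hy hw)
        hσβ, mul_one, eq_comm] at this
  rw [← pcomm_eq_one_iff_commute, pcomm_pow_left_eq_of_mem_center hzx,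
    pow_choose_two_two_pow_eq_one (pow_pcomm_pcomm_left_eq_one hzx hw) (by omega),
    ← Nat.pow_sub_mul_pow 2 hβn, mul_comm, pow_mul, hz, one_pow, mul_one]

end CentralRelators

/-- The integral Heisenberg group, in coordinates `(i, j, k) ↦ X ^ i * Y ^ j * Z ^ k` with
`Z = pcomm X Y` central; the product comes from `Y ^ j * X ^ i = X ^ i * Y ^ j * Z ^ (-i * j)`. -/
@[ext]
structure Heis where
  i : ℤ
  j : ℤ
  k : ℤ

namespace Heis

instance : Mul Heis := ⟨fun g h => ⟨g.i + h.i, g.j + h.j, g.k + h.k - g.j * h.i⟩⟩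
instance : One Heis := ⟨⟨0, 0, 0⟩⟩
instance : Inv Heis := ⟨fun g => ⟨-g.i, -g.j, -g.k - g.j * g.i⟩⟩

@[simp] theorem mul_i (g h : Heis) : (g * h).i = g.i + h.i := rfl
@[simp] theorem mul_j (g h : Heis) : (g * h).j = g.j + h.j := rfl
@[simp] theorem mul_k (g h : Heis) : (g * h).k = g.k + h.k - g.j * h.i := rfl
@[simp] theorem one_i : (1 : Heis).i = 0 := rfl
@[simp] theorem one_j : (1 : Heis).j = 0 := rfl
@[simp] theorem one_k : (1 : Heis).k = 0 := rfl
@[simp] theorem inv_i (g : Heis) : g⁻¹.i = -g.i := rfl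
@[simp] theorem inv_j (g : Heis) : g⁻¹.j = -g.j := rfl
@[simp] theorem inv_k (g : Heis) : g⁻¹.k = -g.k - g.j * g.i := rfl

instance : Group Heis where
  mul_assoc g h f := by ext <;> simp <;> ring
  one_mul g := by ext <;> simp
  mul_one g := by ext <;> simp
  inv_mul_cancel g := by
    ext <;> simp
    ring

def X : Heis := ⟨1, 0, 0⟩
def Y : Heis := ⟨0, 1, 0⟩
def Z : Heis := ⟨0, 0, 1⟩

theorem X_zpow (m : ℤ) : X ^ m = ⟨m, 0, 0⟩ := by
  refine zpow_eq_of_forall_add_one (f := fun n => (⟨n, 0, 0⟩ : Heis)) rfl (fun n => ?_) m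
  ext <;> simp [X]

theorem Y_zpow (m : ℤ) : Y ^ m = ⟨0, m, 0⟩ := by
  refine zpow_eq_of_forall_add_one (f := fun n => (⟨0, n, 0⟩ : Heis)) rfl (fun n => ?_) m
  ext <;> simp [Y]

theorem Z_zpow (m : ℤ) : Z ^ m = ⟨0, 0, m⟩ := by
  refine zpow_eq_of_forall_add_one (f := fun n => (⟨0, 0, n⟩ : Heis)) rfl (fun n => ?_) m
  ext <;> simp [Z]

theorem pcomm_X_Y : pcomm X Y = Z := by
  ext <;> simp [pcomm, X, Y, Z]

theorem Z_mem_center : Z ∈ Subgroup.center Heis :=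
  Subgroup.mem_center_iff.2 fun g => by ext <;> simp [Z, add_comm]

section Lift

variable {G : Type*} [Group G]

def lift (a b : G) (ha : Commute (pcomm a b) a) (hb : Commute (pcomm a b) b) : Heis →* G where
  toFun g := a ^ g.i * b ^ g.j * pcomm a b ^ g.k
  map_one' := by simp
  map_mul' g h := by
    simp only [mul_k, mul_i, mul_j, mul_assoc]
    rw [(ha.zpow_zpow g.k h.i).left_comm, (hb.zpow_zpow g.k h.j).left_comm, ← mul_assoc (b ^ g.j),
      zpow_mul_zpow_comm_of_commute_pcomm ha hb, mul_assoc, mul_assoc,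
      (hb.zpow_zpow _ h.j).left_comm]
    group

@[simp] theorem lift_X {a b : G} {ha : Commute (pcomm a b) a} {hb : Commute (pcomm a b) b} :
    lift a b ha hb X = a := by
  simp [lift, X]

@[simp] theorem lift_Y {a b : G} {ha : Commute (pcomm a b) a} {hb : Commute (pcomm a b) b} :
    lift a b ha hb Y = b := by
  simp [lift, Y]

end Lift

/-- For `α + σ = 2 * β + t` this is the kernel of `Heis → G(α, β, β, σ)`, `X ↦ a`, `Y ↦ b`: the
normal subgroup generated by `Y ^ 2 ^ β`, `Z ^ 2 ^ β` and `X ^ 2 ^ (β + t) * Z ^ (-2 ^ σ)`. -/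
def relKernel (β t σ : ℕ) : Subgroup Heis where
  carrier := {g | (2 : ℤ) ^ (β + t) ∣ g.i ∧ (2 : ℤ) ^ β ∣ g.j ∧
    (2 : ℤ) ^ β * 2 ^ (β + t) ∣ 2 ^ (β + t) * g.k + 2 ^ σ * g.i}
  one_mem' := by simp
  mul_mem' := by
    rintro g h ⟨⟨i₁, hi₁⟩, ⟨j₁, hj₁⟩, ⟨k₁, hk₁⟩⟩ ⟨⟨i₂, hi₂⟩, ⟨j₂, hj₂⟩, ⟨k₂, hk₂⟩⟩
    refine ⟨⟨i₁ + i₂, by simp [hi₁, hi₂]; ring⟩, ⟨j₁ + j₂, by simp [hj₁, hj₂]; ring⟩,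
      ⟨k₁ + k₂ - j₁ * i₂ * 2 ^ (β + t), ?_⟩⟩
    simp only [mul_k, mul_i]
    linear_combination hk₁ + hk₂ - (2 : ℤ) ^ (β + t) * h.i * hj₁ -
      (2 : ℤ) ^ (β + t) * 2 ^ β * j₁ * hi₂
  inv_mem' := by
    rintro g ⟨⟨i₁, hi₁⟩, ⟨j₁, hj₁⟩, ⟨k₁, hk₁⟩⟩
    refine ⟨⟨-i₁, by simp [hi₁]⟩, ⟨-j₁, by simp [hj₁]⟩, ⟨-k₁ - j₁ * i₁ * 2 ^ (β + t), ?_⟩⟩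
    simp only [inv_k, inv_i]
    linear_combination -hk₁ - (2 : ℤ) ^ (β + t) * g.i * hj₁ - (2 : ℤ) ^ (β + t) * 2 ^ β * j₁ * hi₁

instance (β t σ : ℕ) : (relKernel β t σ).Normal := by
  constructor
  rintro g ⟨⟨i₁, hi₁⟩, ⟨j₁, hj₁⟩, ⟨k₁, hk₁⟩⟩ h
  have hconj : h * g * h⁻¹ = ⟨g.i, g.j, g.k + h.i * g.j - h.j * g.i⟩ := by
    ext <;> simp
    ring
  rw [hconj]
  refine ⟨⟨i₁, hi₁⟩, ⟨j₁, hj₁⟩, ⟨k₁ + h.i * j₁ - 2 ^ t * i₁ * h.j, ?_⟩⟩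
  linear_combination hk₁ + (2 : ℤ) ^ (β + t) * h.i * hj₁ - (2 : ℤ) ^ (β + t) * h.j * hi₁

end Heis

theorem relsII.of_zero_pow_ne_one {α β σ : ℕ} (hσβ : σ < β) (h2β : 2 * β ≤ α + σ) :
    (PresentedGroup.of 0 : PresentedGroup (relsII α β β σ)) ^ 2 ^ (α - 1) ≠ 1 := by
  obtain ⟨t, ht⟩ : ∃ t, α + σ = 2 * β + t := ⟨α + σ - 2 * β, by omega⟩
  set π := QuotientGroup.mk' (Heis.relKernel β t σ)
  have hπ (g : Heis) : π g = 1 ↔ g ∈ Heis.relKernel β t σ := QuotientGroup.eq_one_iff g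
  have hXpow (n : ℕ) : π Heis.X ^ n = π ⟨n, 0, 0⟩ := by
    rw [← map_pow, ← zpow_natCast, Heis.X_zpow]
  have hZ (g : Heis) : Commute (pcomm (π Heis.X) (π Heis.Y)) (π g) := by
    rw [← map_pcomm, Heis.pcomm_X_Y]
    exact Commute.map (Subgroup.mem_center_iff.1 Heis.Z_mem_center g).symm π
  have ha : π Heis.X ^ 2 ^ α = 1 := by
    rw [hXpow, hπ]
    refine ⟨pow_dvd_pow _ (by omega), dvd_zero _, ?_⟩
    simp only [mul_zero, zero_add, Nat.cast_pow, Nat.cast_ofNat, ← pow_add]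
    exact pow_dvd_pow _ (by omega)
  have hb : π Heis.Y ^ 2 ^ β = 1 := by
    rw [← map_pow, ← zpow_natCast, Heis.Y_zpow, hπ]
    exact ⟨dvd_zero _, by simp, by simp⟩
  have hab : π Heis.X ^ 2 ^ (α + σ - β) = pcomm (π Heis.X) (π Heis.Y) ^ 2 ^ σ := by
    rw [← map_pcomm, Heis.pcomm_X_Y, hXpow, ← map_pow, ← zpow_natCast, Heis.Z_zpow,
      ← mul_inv_eq_one, ← map_inv, ← map_mul, hπ, show α + σ - β = β + t by omega]
    exact ⟨by simp, by simp, by simp [mul_comm]⟩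
  intro h
  have := congrArg (PresentedGroup.toGroup (relsII.lift_eq_one ha hb (hZ _) (hZ _) hab)) h
  rw [map_pow, PresentedGroup.toGroup.of] at this
  obtain ⟨-, -, hdvd⟩ := (hπ _).1 ((hXpow _).symm.trans this)
  simp only [mul_zero, zero_add, Nat.cast_pow, Nat.cast_ofNat, ← pow_add] at hdvd
  rw [pow_dvd_pow_iff two_ne_zero (by norm_num [Int.isUnit_iff])] at hdvd
  omega

theorem relsII.not_isCapable {α β σ : ℕ} (hσβ : σ < β) (h2β : 2 * β ≤ α + σ)
    (hα : β + 2 ≤ α) : ¬ IsCapable (PresentedGroup (relsII α β β σ)) := by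
  intro hcap
  obtain ⟨K, _, ψ, hψ, hker⟩ := hcap.exists_monoidHom
  choose f hf using fun i => hψ (PresentedGroup.of i)
  have hcenter {g : K} (hg : ψ g = 1) : g ∈ Subgroup.center K := hker ▸ hg
  have hzx : pcomm (pcomm (f 0) (f 1)) (f 0) ∈ Subgroup.center K := hcenter <| by
    simpa [map_pcomm, hf, pcomm_eq_one_iff_commute] using relsII.commute_pcomm_of_zero
  have hzy : pcomm (pcomm (f 0) (f 1)) (f 1) ∈ Subgroup.center K := hcenter <| by
    simpa [map_pcomm, hf, pcomm_eq_one_iff_commute] using relsII.commute_pcomm_of_one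
  have hy : f 1 ^ 2 ^ β ∈ Subgroup.center K := hcenter <| by
    simpa [hf] using relsII.of_one_pow
  have hw : f 0 ^ 2 ^ (α + σ - β) * (pcomm (f 0) (f 1) ^ 2 ^ σ)⁻¹ ∈ Subgroup.center K :=
    hcenter <| by simpa [map_pcomm, hf, mul_inv_eq_one] using relsII.of_zero_pow_eq
  have hx : f 0 ^ 2 ^ (α - 1) ∈ Subgroup.center K := by
    refine mem_center_of_commute_of_ker_le_center ψ hker.le (S := Set.range f) ?_ ?_
    · rw [← Set.range_comp, show ψ ∘ f = PresentedGroup.of from funext hf,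
        PresentedGroup.closure_range_of]
    · rintro _ ⟨i, rfl⟩
      fin_cases i
      · exact (Commute.refl _).pow_left _
      · exact commute_pow_two_pow_of_mem_center hσβ (by omega) (by omega) (by omega) hzx hzy hy hw
  refine relsII.of_zero_pow_ne_one hσβ h2β ?_
  rw [← hf, ← map_pow]
  exact hker.ge hx

/-- The division is exact, since `t * (t - 1)` is even. -/
def choose2 (t : ℤ) : ℤ := t * (t - 1) / 2

theorem two_mul_choose2 (t : ℤ) : 2 * choose2 t = t * (t - 1) :=
  Int.mul_ediv_cancel' (Int.even_mul_pred_self t).two_dvd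

theorem choose2_add (s t : ℤ) : choose2 (s + t) = choose2 s + choose2 t + s * t := by
  linarith [two_mul_choose2 (s + t), two_mul_choose2 s, two_mul_choose2 t]

theorem choose2_neg (t : ℤ) : choose2 (-t) = choose2 t + t := by
  linarith [two_mul_choose2 (-t), two_mul_choose2 t]

@[simp] theorem choose2_zero : choose2 0 = 0 := rfl
@[simp] theorem choose2_one : choose2 1 = 0 := rfl

/-- The lattice of the 4-dimensional filiform nilpotent Lie group, in coordinates
`(i, j, k, n) ↦ X ^ i * Y ^ j * Z ^ k * W ^ n` where `Z = pcomm X Y`, `W = pcomm Z Y` is central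
and `Z` commutes with `X`. -/
@[ext]
structure Filiform where
  i : ℤ
  j : ℤ
  k : ℤ
  n : ℤ

namespace Filiform

instance : Mul Filiform := ⟨fun g h => ⟨g.i + h.i, g.j + h.j, g.k + h.k - g.j * h.i,
  g.n + h.n - h.i * choose2 g.j + (g.k - g.j * h.i) * h.j⟩⟩
instance : One Filiform := ⟨⟨0, 0, 0, 0⟩⟩
instance : Inv Filiform := ⟨fun g => ⟨-g.i, -g.j, -g.i * g.j - g.k,
  -choose2 g.j * g.i + g.i * g.j * g.j + g.j * g.k - g.n⟩⟩

@[simp] theorem mul_i (g h : Filiform) : (g * h).i = g.i + h.i := rfl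
@[simp] theorem mul_j (g h : Filiform) : (g * h).j = g.j + h.j := rfl
@[simp] theorem mul_k (g h : Filiform) : (g * h).k = g.k + h.k - g.j * h.i := rfl
@[simp] theorem mul_n (g h : Filiform) :
    (g * h).n = g.n + h.n - h.i * choose2 g.j + (g.k - g.j * h.i) * h.j := rfl
@[simp] theorem one_i : (1 : Filiform).i = 0 := rfl
@[simp] theorem one_j : (1 : Filiform).j = 0 := rfl
@[simp] theorem one_k : (1 : Filiform).k = 0 := rfl
@[simp] theorem one_n : (1 : Filiform).n = 0 := rfl
@[simp] theorem inv_i (g : Filiform) : g⁻¹.i = -g.i := rfl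
@[simp] theorem inv_j (g : Filiform) : g⁻¹.j = -g.j := rfl
@[simp] theorem inv_k (g : Filiform) : g⁻¹.k = -g.i * g.j - g.k := rfl
@[simp] theorem inv_n (g : Filiform) :
    g⁻¹.n = -choose2 g.j * g.i + g.i * g.j * g.j + g.j * g.k - g.n := rfl

instance : Group Filiform where
  mul_assoc g h f := by ext <;> simp [choose2_add] <;> ring
  one_mul g := by ext <;> simp
  mul_one g := by ext <;> simp
  inv_mul_cancel g := by
    ext <;> simp [choose2_neg]
    · ring
    · linear_combination (-g.i) * two_mul_choose2 g.j

def toHeis : Filiform →* Heis where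
  toFun g := ⟨g.i, g.j, g.k⟩
  map_one' := rfl
  map_mul' _ _ := rfl

def X : Filiform := ⟨1, 0, 0, 0⟩
def Y : Filiform := ⟨0, 1, 0, 0⟩
def Z : Filiform := ⟨0, 0, 1, 0⟩
def W : Filiform := ⟨0, 0, 0, 1⟩

theorem X_zpow (m : ℤ) : X ^ m = ⟨m, 0, 0, 0⟩ := by
  refine zpow_eq_of_forall_add_one (f := fun n => (⟨n, 0, 0, 0⟩ : Filiform)) rfl (fun n => ?_) m
  ext <;> simp [X]

theorem Y_zpow (m : ℤ) : Y ^ m = ⟨0, m, 0, 0⟩ := by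
  refine zpow_eq_of_forall_add_one (f := fun n => (⟨0, n, 0, 0⟩ : Filiform)) rfl (fun n => ?_) m
  ext <;> simp [Y]

theorem Z_zpow (m : ℤ) : Z ^ m = ⟨0, 0, m, 0⟩ := by
  refine zpow_eq_of_forall_add_one (f := fun n => (⟨0, 0, n, 0⟩ : Filiform)) rfl (fun n => ?_) m
  ext <;> simp [Z]

theorem W_zpow (m : ℤ) : W ^ m = ⟨0, 0, 0, m⟩ := by
  refine zpow_eq_of_forall_add_one (f := fun n => (⟨0, 0, 0, n⟩ : Filiform)) rfl (fun n => ?_) m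
  ext <;> simp [W]

theorem pcomm_X_Y : pcomm X Y = Z := by
  ext <;> simp [pcomm, X, Y, Z, choose2_neg]

theorem commute_Z_X : Commute Z X := by
  ext <;> simp [Z, X]

theorem pcomm_Z_Y : pcomm Z Y = W := by
  ext <;> simp [pcomm, Y, Z, W, choose2_neg]

theorem W_mem_center : W ∈ Subgroup.center Filiform :=
  Subgroup.mem_center_iff.2 fun g => by ext <;> simp [W, add_comm]

theorem pcomm_X (g : Filiform) : pcomm g X = ⟨0, 0, -g.j, -choose2 g.j⟩ := by
  apply pcomm_eq_of_mul_eq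
  ext <;> simp [X] <;> ring

theorem pcomm_Y (g : Filiform) : pcomm g Y = ⟨0, 0, g.i, g.k + g.i * g.j⟩ := by
  apply pcomm_eq_of_mul_eq
  ext <;> simp [Y] <;> ring

theorem eq_X_zpow_mul (g : Filiform) : g = X ^ g.i * Y ^ g.j * Z ^ g.k * W ^ g.n := by
  rw [X_zpow, Y_zpow, Z_zpow, W_zpow]
  ext <;> simp

theorem closure_X_Y : Subgroup.closure {X, Y} = ⊤ := by
  set H := Subgroup.closure {X, Y}
  have hX : X ∈ H := Subgroup.subset_closure (by simp)
  have hY : Y ∈ H := Subgroup.subset_closure (by simp)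
  have hpcomm {u v : Filiform} (hu : u ∈ H) (hv : v ∈ H) : pcomm u v ∈ H :=
    H.mul_mem (H.mul_mem (H.mul_mem (H.inv_mem hu) (H.inv_mem hv)) hu) hv
  have hZ : Z ∈ H := pcomm_X_Y ▸ hpcomm hX hY
  have hW : W ∈ H := pcomm_Z_Y ▸ hpcomm hZ hY
  refine (Subgroup.eq_top_iff' H).2 fun g => ?_
  rw [eq_X_zpow_mul g]
  exact H.mul_mem (H.mul_mem (H.mul_mem (H.zpow_mem hX _) (H.zpow_mem hY _)) (H.zpow_mem hZ _))
    (H.zpow_mem hW _)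

/-- The normal subgroup generated by `X ^ 2 ^ (b + 2)`, `Y ^ 2 ^ (b + 1)`, `W ^ 2 ^ (b + 1)` and
`Z ^ 2 ^ (b + 1) * W ^ 2 ^ b`. Modulo it, the centre is generated by `W` and
`X ^ 2 ^ (b + 1) * Z ^ (-2 ^ b)`. -/
def coverKernel (b : ℕ) : Subgroup Filiform where
  carrier := {g | (2 : ℤ) ^ (b + 2) ∣ g.i ∧ (2 : ℤ) ^ (b + 1) ∣ g.j ∧ (2 : ℤ) ^ (b + 1) ∣ g.k ∧
    (2 : ℤ) ^ (b + 2) ∣ 2 * g.n + g.k}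
  one_mem' := by simp
  mul_mem' := by
    rintro g h ⟨⟨i₁, hi₁⟩, ⟨j₁, hj₁⟩, ⟨k₁, hk₁⟩, ⟨n₁, hn₁⟩⟩
      ⟨⟨i₂, hi₂⟩, ⟨j₂, hj₂⟩, ⟨k₂, hk₂⟩, ⟨n₂, hn₂⟩⟩
    refine ⟨⟨i₁ + i₂, by simp [hi₁, hi₂]; ring⟩, ⟨j₁ + j₂, by simp [hj₁, hj₂]; ring⟩,
      ⟨k₁ + k₂ - 2 * g.j * i₂, ?_⟩,
      ⟨n₁ + n₂ - 2 * i₂ * choose2 g.j + k₁ * h.j - 2 * g.j * i₂ * h.j - g.j * i₂, ?_⟩⟩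
    · simp only [mul_k]
      linear_combination hk₁ + hk₂ - g.j * hi₂
    · simp only [mul_k, mul_n]
      linear_combination hn₁ + hn₂ + 2 * h.j * hk₁ -
        (2 * choose2 g.j + 2 * g.j * h.j + g.j) * hi₂
  inv_mem' := by
    rintro g ⟨⟨i₁, hi₁⟩, ⟨j₁, hj₁⟩, ⟨k₁, hk₁⟩, ⟨n₁, hn₁⟩⟩
    refine ⟨⟨-i₁, by simp [hi₁]⟩, ⟨-j₁, by simp [hj₁]⟩, ⟨-2 * i₁ * g.j - k₁, ?_⟩,
      ⟨-n₁ + i₁ * (-2 * choose2 g.j + 2 * g.j * g.j - g.j) + g.j * k₁, ?_⟩⟩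
    · simp only [inv_k]
      linear_combination -hk₁ - g.j * hi₁
    · simp only [inv_k, inv_n]
      linear_combination -hn₁ + (-2 * choose2 g.j + 2 * g.j * g.j - g.j) * hi₁ + 2 * g.j * hk₁

instance (b : ℕ) : (coverKernel b).Normal := by
  constructor
  rintro g ⟨⟨i₁, hi₁⟩, ⟨j₁, hj₁⟩, ⟨k₁, hk₁⟩, ⟨n₁, hn₁⟩⟩ h
  have hconj : h * g * h⁻¹ = ⟨g.i, g.j, g.k + h.i * g.j - h.j * g.i,
      g.n - choose2 h.j * g.i + h.i * choose2 g.j + h.j * h.j * g.i - h.j * g.i * g.j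
        - h.j * g.k + h.k * g.j⟩ := by
    ext <;> simp [choose2_add] <;> ring
  rw [hconj]
  refine ⟨⟨i₁, hi₁⟩, ⟨j₁, hj₁⟩, ⟨k₁ + h.i * j₁ - 2 * h.j * i₁, ?_⟩,
    ⟨n₁ + i₁ * (-2 * choose2 h.j + 2 * h.j * h.j - 2 * h.j * g.j - h.j) + h.i * 2 ^ b * j₁ ^ 2
      - h.j * k₁ + h.k * j₁, ?_⟩⟩
  · linear_combination hk₁ + h.i * hj₁ - h.j * hi₁
  · linear_combination hn₁ + (-2 * choose2 h.j + 2 * h.j * h.j - 2 * h.j * g.j - h.j) * hi₁ +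
      h.i * two_mul_choose2 g.j + h.i * (g.j + 2 ^ (b + 1) * j₁) * hj₁ - 2 * h.j * hk₁ +
      2 * h.k * hj₁

abbrev Cover (b : ℕ) := Filiform ⧸ coverKernel b

theorem mk_mem_center_iff {b : ℕ} {g : Filiform} :
    (g : Cover b) ∈ Subgroup.center (Cover b) ↔
      pcomm g X ∈ coverKernel b ∧ pcomm g Y ∈ coverKernel b := by
  have hgen : Subgroup.closure {(X : Cover b), (Y : Cover b)} = ⊤ := by
    rw [← QuotientGroup.mk'_apply, ← QuotientGroup.mk'_apply, ← Set.image_pair,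
      ← MonoidHom.map_closure, closure_X_Y, ← MonoidHom.range_eq_map, QuotientGroup.range_mk']
  rw [Subgroup.mem_center_iff_mem_centralizer hgen, Subgroup.mem_centralizer_iff]
  simp only [Set.mem_insert_iff, Set.mem_singleton_iff, forall_eq_or_imp, forall_eq]
  rw [← QuotientGroup.commute_mk_iff, ← QuotientGroup.commute_mk_iff]
  exact and_congr eq_comm eq_comm

section CentralQuotient

variable (b : ℕ)

def coverHom : Filiform →* PresentedGroup (relsII (b + 2) (b + 1) (b + 1) b) :=
  (Heis.lift _ _ relsII.commute_pcomm_of_zero relsII.commute_pcomm_of_one).comp toHeis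

theorem coverHom_X : coverHom b X = PresentedGroup.of 0 :=
  Heis.lift_X (ha := relsII.commute_pcomm_of_zero) (hb := relsII.commute_pcomm_of_one)

theorem coverHom_Y : coverHom b Y = PresentedGroup.of 1 :=
  Heis.lift_Y (ha := relsII.commute_pcomm_of_zero) (hb := relsII.commute_pcomm_of_one)

variable {b}

theorem coverHom_eq_one {g : Filiform} {i₁ : ℤ} (hi : g.i = 2 ^ (b + 1) * i₁)
    (hj : (2 : ℤ) ^ (b + 1) ∣ g.j) (hk : (2 : ℤ) ^ (b + 1) ∣ 2 ^ b * i₁ + g.k) :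
    coverHom b g = 1 := by
  set G := PresentedGroup (relsII (b + 2) (b + 1) (b + 1) b)
  have ha : (PresentedGroup.of 0 : G) ^ (2 : ℤ) ^ (b + 1) =
      pcomm (.of 0) (.of 1) ^ (2 : ℤ) ^ b := by
    have := relsII.of_zero_pow_eq (α := b + 2) (β := b + 1) (γ := b + 1) (σ := b)
    rw [show b + 2 + b - (b + 1) = b + 1 by omega] at this
    exact_mod_cast this
  have hb : (PresentedGroup.of 1 : G) ^ (2 : ℤ) ^ (b + 1) = 1 := by
    exact_mod_cast relsII.of_one_pow
  have hc : pcomm (PresentedGroup.of 0 : G) (.of 1) ^ (2 : ℤ) ^ (b + 1) = 1 := by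
    rw [← pcomm_zpow_right relsII.commute_pcomm_of_one]
    simp [hb, pcomm]
  obtain ⟨j₁, hj₁⟩ := hj
  obtain ⟨k₁, hk₁⟩ := hk
  change (PresentedGroup.of 0 : G) ^ g.i * PresentedGroup.of 1 ^ g.j *
    pcomm (.of 0) (.of 1) ^ g.k = 1
  rw [hi, hj₁, zpow_mul, ha, zpow_mul (PresentedGroup.of 1), hb, one_zpow, mul_one, ← zpow_mul,
    ← zpow_add, hk₁, zpow_mul, hc, one_zpow]

theorem coverKernel_le_ker : coverKernel b ≤ (coverHom b).ker := by
  rintro g ⟨⟨i₁, hi₁⟩, hj, ⟨k₁, hk₁⟩, -⟩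
  refine coverHom_eq_one (i₁ := 2 * i₁) (by rw [hi₁]; ring) hj ⟨i₁ + k₁, ?_⟩
  rw [hk₁]; ring

theorem coverHom_eq_one_of_mk_mem_center {g : Filiform}
    (hg : (g : Cover b) ∈ Subgroup.center (Cover b)) : coverHom b g = 1 := by
  obtain ⟨⟨-, -, ⟨j₁, hj₁⟩, -⟩, ⟨-, -, ⟨i₁, hi₁⟩, ⟨m, hm⟩⟩⟩ := mk_mem_center_iff.1 hg
  rw [pcomm_X] at hj₁
  rw [pcomm_Y] at hi₁ hm
  dsimp only at hj₁ hi₁ hm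
  refine coverHom_eq_one hi₁ ⟨-j₁, by linear_combination -hj₁⟩ ⟨m - i₁ * g.j, ?_⟩
  refine mul_left_cancel₀ (two_ne_zero (α := ℤ)) ?_
  linear_combination hm - (1 + 2 * g.j) * hi₁

variable (b)

def ofCentralQuotient :
    Cover b ⧸ Subgroup.center (Cover b) →* PresentedGroup (relsII (b + 2) (b + 1) (b + 1) b) :=
  QuotientGroup.lift _ (QuotientGroup.lift _ (coverHom b) coverKernel_le_ker) fun q hq => by
    induction q using QuotientGroup.induction_on with
    | H g => exact coverHom_eq_one_of_mk_mem_center hq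

def projCentral : Filiform →* Cover b ⧸ Subgroup.center (Cover b) :=
  (QuotientGroup.mk' _).comp (QuotientGroup.mk' _)

theorem projCentral_surjective : Function.Surjective (projCentral b) :=
  (QuotientGroup.mk'_surjective _).comp (QuotientGroup.mk'_surjective _)

theorem ofCentralQuotient_projCentral (g : Filiform) :
    ofCentralQuotient b (projCentral b g) = coverHom b g :=
  rfl

theorem projCentral_eq_one {g : Filiform} (hg : (g : Cover b) ∈ Subgroup.center (Cover b)) :
    projCentral b g = 1 :=
  (QuotientGroup.eq_one_iff _).2 hg

theorem projCentral_eq_one_of_mem {g : Filiform} (hg : g ∈ coverKernel b) :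
    projCentral b g = 1 := by
  simp [projCentral, (QuotientGroup.eq_one_iff g).2 hg]

theorem lift_projCentral_eq_one : ∀ r ∈ relsII (b + 2) (b + 1) (b + 1) b,
    FreeGroup.lift ![projCentral b X, projCentral b Y] r = 1 := by
  have hZ : pcomm (projCentral b X) (projCentral b Y) = projCentral b Z := by
    rw [← map_pcomm, pcomm_X_Y]
  refine relsII.lift_eq_one ?_ ?_ ?_ ?_ ?_
  · rw [← map_pow, ← zpow_natCast, X_zpow]
    exact projCentral_eq_one_of_mem b ⟨by simp, by simp, by simp, by simp⟩
  · rw [← map_pow, ← zpow_natCast, Y_zpow]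
    exact projCentral_eq_one_of_mem b ⟨by simp, by simp, by simp, by simp⟩
  · rw [hZ]
    exact commute_Z_X.map _
  · rw [hZ, ← pcomm_eq_one_iff_commute, ← map_pcomm, pcomm_Z_Y]
    refine projCentral_eq_one b (mk_mem_center_iff.2 ⟨?_, ?_⟩) <;>
      simp [pcomm_eq_one_iff_commute.2 (Subgroup.mem_center_iff.1 W_mem_center _).symm]
  · rw [hZ, show b + 2 + b - (b + 1) = b + 1 by omega, ← map_pow, ← map_pow, ← mul_inv_eq_one,
      ← map_inv, ← map_mul]
    refine projCentral_eq_one b (mk_mem_center_iff.2 ⟨?_, ?_⟩)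
    all_goals rw [← zpow_natCast, ← zpow_natCast, X_zpow, Z_zpow]
    · rw [pcomm_X]
      exact ⟨by simp, by simp, by simp, by simp⟩
    · rw [pcomm_Y]
      exact ⟨by simp, by simp, by simp, by simp [pow_succ, mul_comm]⟩

def toCentralQuotient :
    PresentedGroup (relsII (b + 2) (b + 1) (b + 1) b) →* Cover b ⧸ Subgroup.center (Cover b) :=
  PresentedGroup.toGroup (lift_projCentral_eq_one b)

theorem toCentralQuotient_surjective : Function.Surjective (toCentralQuotient b) := by
  have hgen : Subgroup.closure {projCentral b X, projCentral b Y} = ⊤ := by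
    rw [← Set.image_pair, ← MonoidHom.map_closure, closure_X_Y, ← MonoidHom.range_eq_map,
      MonoidHom.range_eq_top.2 (projCentral_surjective b)]
  rw [← MonoidHom.range_eq_top, eq_top_iff, ← hgen, Subgroup.closure_le]
  rintro _ (rfl | rfl)
  · exact ⟨PresentedGroup.of 0, PresentedGroup.toGroup.of _⟩
  · exact ⟨PresentedGroup.of 1, PresentedGroup.toGroup.of _⟩

theorem ofCentralQuotient_comp_toCentralQuotient :
    (ofCentralQuotient b).comp (toCentralQuotient b) = MonoidHom.id _ := by
  refine PresentedGroup.ext fun i => ?_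
  fin_cases i
  · simp [toCentralQuotient, PresentedGroup.toGroup.of, ofCentralQuotient_projCentral, coverHom_X]
  · simp [toCentralQuotient, PresentedGroup.toGroup.of, ofCentralQuotient_projCentral, coverHom_Y]

end CentralQuotient

end Filiform

theorem relsII.isCapable (b : ℕ) :
    IsCapable (PresentedGroup (relsII (b + 2) (b + 1) (b + 1) b)) := by
  have hinj : Function.Injective (Filiform.toCentralQuotient b) :=
    Function.LeftInverse.injective (g := Filiform.ofCentralQuotient b)
      (DFunLike.congr_fun (Filiform.ofCentralQuotient_comp_toCentralQuotient b))
  exact ⟨Filiform.Cover b, inferInstance,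
    ⟨(MulEquiv.ofBijective _ ⟨hinj, Filiform.toCentralQuotient_surjective b⟩).symm⟩⟩

theorem general_type_gamma_eq_beta_capable_iff_general (α β γ σ : ℕ)
    (hσγ : σ < γ) (h2γ : 2 * γ ≤ α + σ) (hγeqβ : γ = β) :
    IsCapable (PresentedGroup (relsII α β γ σ)) ↔ (α = β + 1 ∧ σ = β - 1) := by
  subst hγeqβ
  constructor
  · intro hcap
    have hα : α ≤ γ + 1 := by
      by_contra! hα
      exact relsII.not_isCapable hσγ h2γ hα hcap
    omega
  · rintro ⟨rfl, rfl⟩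
    obtain ⟨b, rfl⟩ : ∃ b, γ = b + 1 := ⟨γ - 1, by omega⟩
    exact relsII.isCapable b

/-- A general type group with `β ≥ γ > σ ≥ 0`, `α + σ ≥ 2γ`, `α + β + σ > 3`,
and `γ = β` is capable if and only if `α = β + 1` and `σ = β - 1`. -/
theorem general_type_gamma_eq_beta_capable_iff (α β γ σ : ℕ)
    (hσγ : σ < γ) (hγβ : γ ≤ β) (h2γ : 2 * γ ≤ α + σ)
    (hsum : 3 < α + β + σ) (hγeqβ : γ = β) :
    IsCapable (PresentedGroup (relsII α β γ σ)) ↔ (α = β + 1 ∧ σ = β - 1) :=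
  general_type_gamma_eq_beta_capable_iff_general α β γ σ hσγ h2γ hγeqβ
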